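/- For every integer k ≥ 1 and all integers i, j ≥ 0 with i + j + 1 ≤ k, each of the three squared distances ‖𝒜_{i+1,j} − 𝒜_{i,j}‖², ‖𝒜_{i,j+1} − 𝒜_{i,j}‖², and ‖𝒜_{i+1,j} − 𝒜_{i,j+1}‖² is at least (2/k²)·(2 − (k+1)²/k²). -/

import Mathlib

/-!
In cylindrical coordinates `𝒜_{i,j}` has radius `t√(2−t²)`, height `1 − t²` and longitude
`πj/(2(i+j))`, where `t = (i+j)/k`. A change of longitude only increases distances, so for the two
neighbours on the next row (`s = t + 1/k`) the squared distance is at least that of the meridian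
chord, which is `(s√(2−t²) − t√(2−s²))²`; multiplying the chord by
`s√(2−t²) + t√(2−s²) ≤ √2 (s + t)` gives `2(s² − t²)`, so the chord is at least `√2/k`.
The diagonal neighbours lie on a common parallel of radius at least `t = n/k`, `n = i + j + 1`,
and differ in longitude by `π/(2n)`; by concavity of `sin`, `1 − cos x ≥ 4x²/π²` on `[0, π/2]`,
which again gives `2/k²`. Finally `2/k² ≥ (2/k²)(2 − (k+1)²/k²)`.
-/

open Real

noncomputable section

/-- Euclidean space `ℝ³`. -/
abbrev E3 := EuclideanSpace ℝ (Fin 3)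

/-- Constructor for points of `ℝ³` from coordinates. -/
def pt3 (a b c : ℝ) : E3 := (EuclideanSpace.equiv (Fin 3) ℝ).symm ![a, b, c]

/-- The lattice point `𝒜_{i,j}` of the equal area octahedral configuration on the
positive-octant face, for parameter `k`: with `t = (i+j)/k`,
`𝒜_{i,j} = (t√(2−t²)·cos(πj/(2(i+j))), t√(2−t²)·sin(πj/(2(i+j))), 1−t²)` when
`i + j > 0`, and `𝒜_{0,0} = (0,0,1)`. -/
def octA (k i j : ℕ) : E3 :=
  if i + j = 0 then pt3 0 0 1
  else
    pt3 (((i : ℝ) + j) / k * Real.sqrt (2 - (((i : ℝ) + j) / k) ^ 2) *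
          Real.cos (π * j / (2 * ((i : ℝ) + j))))
        (((i : ℝ) + j) / k * Real.sqrt (2 - (((i : ℝ) + j) / k) ^ 2) *
          Real.sin (π * j / (2 * ((i : ℝ) + j))))
        (1 - (((i : ℝ) + j) / k) ^ 2)

lemma norm_pt3_sub_pt3_sq (a b c a' b' c' : ℝ) :
    ‖pt3 a b c - pt3 a' b' c'‖ ^ 2 = (a - a') ^ 2 + (b - b') ^ 2 + (c - c') ^ 2 := by
  simp [pt3, EuclideanSpace.norm_sq_eq, Fin.sum_univ_three]

def cyl (r θ z : ℝ) : E3 := pt3 (r * cos θ) (r * sin θ) z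

lemma norm_cyl_sub_cyl_sq (r θ z r' θ' z' : ℝ) :
    ‖cyl r θ z - cyl r' θ' z'‖ ^ 2 =
      (r - r') ^ 2 + (z - z') ^ 2 + 2 * r * r' * (1 - cos (θ - θ')) := by
  rw [cyl, cyl, norm_pt3_sub_pt3_sq, cos_sub]
  linear_combination r ^ 2 * sin_sq_add_cos_sq θ + r' ^ 2 * sin_sq_add_cos_sq θ'

lemma sq_sub_add_sq_sub_le_norm_cyl_sub_cyl_sq {r r' : ℝ} (hr : 0 ≤ r) (hr' : 0 ≤ r')
    (θ θ' z z' : ℝ) : (r - r') ^ 2 + (z - z') ^ 2 ≤ ‖cyl r θ z - cyl r' θ' z'‖ ^ 2 := by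
  rw [norm_cyl_sub_cyl_sq]
  have := cos_le_one (θ - θ')
  have : 0 ≤ 2 * r * r' * (1 - cos (θ - θ')) := by positivity
  linarith

def octPoint (t θ : ℝ) : E3 := cyl (t * √(2 - t ^ 2)) θ (1 - t ^ 2)

lemma octA_eq_octPoint (k i j : ℕ) :
    octA k i j = octPoint (((i : ℝ) + j) / k) (π * j / (2 * ((i : ℝ) + j))) := by
  unfold octA octPoint cyl
  split_ifs with h
  · obtain ⟨rfl, rfl⟩ := Nat.add_eq_zero_iff.mp h
    simp
  · rfl

lemma cos_le_one_sub_four_div_pi_sq_mul_sq {x : ℝ} (hx₀ : 0 ≤ x) (hx : x ≤ π / 2) :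
    cos x ≤ 1 - 4 / π ^ 2 * x ^ 2 := by
  have hb₀ : 0 ≤ 2 * x / π := by positivity
  have hb₁ : 2 * x / π ≤ 1 := by rw [div_le_one pi_pos]; linarith
  have hsin : 2 * x / π * (√2 / 2) ≤ sin (x / 2) := by
    have := strictConcaveOn_sin_Icc.concaveOn.2 (x := 0) (y := π / 4)
      ⟨le_rfl, pi_pos.le⟩ ⟨by positivity, by linarith [pi_pos]⟩ (sub_nonneg.2 hb₁) hb₀
      (sub_add_cancel _ _)
    simp only [smul_eq_mul, sin_zero, mul_zero, zero_add, sin_pi_div_four] at this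
    rwa [show 2 * x / π * (π / 4) = x / 2 by field_simp; ring] at this
  calc cos x = 1 - 2 * sin (x / 2) ^ 2 := by rw [sin_sq_eq_half_sub]; ring_nf
    _ ≤ 1 - 2 * (2 * x / π * (√2 / 2)) ^ 2 := by gcongr
    _ = 1 - 4 / π ^ 2 * x ^ 2 := by
      rw [mul_pow, div_pow √2, sq_sqrt zero_le_two]; ring

lemma two_mul_sq_sub_le_norm_octPoint_sub_sq {s t : ℝ} (hs₀ : 0 ≤ s) (ht₀ : 0 ≤ t)
    (hs : s ^ 2 ≤ 2) (ht : t ^ 2 ≤ 2) (φ θ : ℝ) :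
    2 * (s - t) ^ 2 ≤ ‖octPoint s φ - octPoint t θ‖ ^ 2 := by
  set a := √(2 - t ^ 2)
  set b := √(2 - s ^ 2)
  have ha : a ^ 2 = 2 - t ^ 2 := sq_sqrt (by linarith)
  have hb : b ^ 2 = 2 - s ^ 2 := sq_sqrt (by linarith)
  have ha₀ : 0 ≤ a := sqrt_nonneg _
  have hb₀ : 0 ≤ b := sqrt_nonneg _
  have hchord : (s * b - t * a) ^ 2 + ((1 - s ^ 2) - (1 - t ^ 2)) ^ 2 = (s * a - t * b) ^ 2 := by
    linear_combination (s ^ 2 - t ^ 2) * hb + (t ^ 2 - s ^ 2) * ha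
  have hprod : (s * a - t * b) * (s * a + t * b) = 2 * (s - t) * (s + t) := by
    linear_combination s ^ 2 * ha - t ^ 2 * hb
  have hsum : (s * a + t * b) ^ 2 ≤ 2 * (s + t) ^ 2 := by
    nlinarith [mul_nonneg (mul_nonneg hs₀ ht₀) (sq_nonneg (a - b)),
      mul_nonneg (mul_nonneg hs₀ ht₀) (add_nonneg (sq_nonneg s) (sq_nonneg t)), sq_nonneg (s * t)]
  have hstretch : 2 * (s - t) ^ 2 * (2 * (s + t) ^ 2) ≤ (s * a - t * b) ^ 2 * (2 * (s + t) ^ 2) :=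
    calc 2 * (s - t) ^ 2 * (2 * (s + t) ^ 2) = ((s * a - t * b) * (s * a + t * b)) ^ 2 := by
          rw [hprod]; ring
      _ = (s * a - t * b) ^ 2 * (s * a + t * b) ^ 2 := mul_pow _ _ _
      _ ≤ (s * a - t * b) ^ 2 * (2 * (s + t) ^ 2) := by gcongr
  calc 2 * (s - t) ^ 2 ≤ (s * a - t * b) ^ 2 := by
        rcases (add_nonneg hs₀ ht₀).eq_or_lt with hst | hst
        · obtain rfl : s = 0 := by linarith
          obtain rfl : t = 0 := by linarith
          simp
        · exact le_of_mul_le_mul_right hstretch (by positivity)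
    _ = (s * b - t * a) ^ 2 + ((1 - s ^ 2) - (1 - t ^ 2)) ^ 2 := hchord.symm
    _ ≤ ‖octPoint s φ - octPoint t θ‖ ^ 2 :=
        sq_sub_add_sq_sub_le_norm_cyl_sub_cyl_sq (by positivity) (by positivity) _ _ _ _

lemma two_div_sq_le_norm_octPoint_sub_sq {n k : ℝ} (hn : 1 ≤ n) (hnk : n ≤ k) {θ φ : ℝ}
    (hφ : φ - θ = π / (2 * n)) :
    2 / k ^ 2 ≤ ‖octPoint (n / k) θ - octPoint (n / k) φ‖ ^ 2 := by
  have hn₀ : 0 < n := by linarith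
  have hk₀ : 0 < k := by linarith
  have ht₁ : n / k ≤ 1 := (div_le_one hk₀).2 hnk
  have hr : (n / k) ^ 2 ≤ (n / k * √(2 - (n / k) ^ 2)) ^ 2 := by
    have ht₀ : 0 ≤ n / k := by positivity
    rw [mul_pow, sq_sqrt (by nlinarith)]
    nlinarith [mul_le_mul ht₁ ht₁ ht₀ zero_le_one, sq_nonneg (n / k)]
  have hcos : 1 / n ^ 2 ≤ 1 - cos (θ - φ) := by
    have := cos_le_one_sub_four_div_pi_sq_mul_sq (x := π / (2 * n)) (by positivity)
      (by rw [div_le_div_iff_of_pos_left pi_pos (by positivity) two_pos]; linarith)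
    rw [show θ - φ = -(π / (2 * n)) by linarith, cos_neg]
    field_simp at this ⊢
    linarith
  calc 2 / k ^ 2 = 2 * (n / k) ^ 2 * (1 / n ^ 2) := by field_simp
    _ ≤ 2 * (n / k * √(2 - (n / k) ^ 2)) ^ 2 * (1 - cos (θ - φ)) := by gcongr
    _ = ‖octPoint (n / k) θ - octPoint (n / k) φ‖ ^ 2 := by
      rw [octPoint, octPoint, norm_cyl_sub_cyl_sq]; ring

theorem octahedral_neighbor_separation_general (k i j : ℕ)
    (hij : i + j + 1 ≤ k) :
    (2 / (k : ℝ) ^ 2) * (2 - ((k : ℝ) + 1) ^ 2 / (k : ℝ) ^ 2) ≤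
        ‖octA k (i + 1) j - octA k i j‖ ^ 2 ∧
    (2 / (k : ℝ) ^ 2) * (2 - ((k : ℝ) + 1) ^ 2 / (k : ℝ) ^ 2) ≤
        ‖octA k i (j + 1) - octA k i j‖ ^ 2 ∧
    (2 / (k : ℝ) ^ 2) * (2 - ((k : ℝ) + 1) ^ 2 / (k : ℝ) ^ 2) ≤
        ‖octA k (i + 1) j - octA k i (j + 1)‖ ^ 2 := by
  have hk : (0 : ℝ) < k := Nat.cast_pos.2 (by omega)
  have hijk : (i : ℝ) + j + 1 ≤ k := by exact_mod_cast hij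
  have hbound : (2 / (k : ℝ) ^ 2) * (2 - ((k : ℝ) + 1) ^ 2 / (k : ℝ) ^ 2) ≤ 2 / k ^ 2 := by
    have : 1 ≤ ((k : ℝ) + 1) ^ 2 / k ^ 2 := by rw [one_le_div (by positivity)]; nlinarith
    nlinarith [show 0 ≤ 2 / (k : ℝ) ^ 2 by positivity]
  have hparam {n : ℝ} (hn : 0 ≤ n) (hnk : n ≤ k) : 0 ≤ n / k ∧ (n / k) ^ 2 ≤ 2 :=
    ⟨by positivity, by nlinarith [div_nonneg hn hk.le, (div_le_one hk).2 hnk]⟩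
  have hradial (φ θ : ℝ) :
      2 / k ^ 2 ≤ ‖octPoint ((i + j + 1) / k) φ - octPoint ((i + j) / k) θ‖ ^ 2 := by
    obtain ⟨hs₀, hs⟩ := hparam (by positivity) hijk
    obtain ⟨ht₀, ht⟩ := hparam (n := i + j) (by positivity) (by linarith)
    calc 2 / (k : ℝ) ^ 2 = 2 * ((i + j + 1) / k - (i + j) / k) ^ 2 := by field_simp; ring
      _ ≤ _ := two_mul_sq_sub_le_norm_octPoint_sub_sq hs₀ ht₀ hs ht φ θ
  simp only [octA_eq_octPoint, Nat.cast_add, Nat.cast_one]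
  refine ⟨hbound.trans ?_, hbound.trans ?_, hbound.trans ?_⟩
  · rw [show (i : ℝ) + 1 + j = i + j + 1 by ring]
    exact hradial _ _
  · rw [show (i : ℝ) + (j + 1) = i + j + 1 by ring]
    exact hradial _ _
  · rw [show (i : ℝ) + (j + 1) = i + j + 1 by ring, show (i : ℝ) + 1 + j = i + j + 1 by ring]
    exact two_div_sq_le_norm_octPoint_sub_sq (by linarith) hijk (by field_simp; ring)

/-- Nearest-neighbor separation of the equal area octahedral lattice: for `k ≥ 1` and
`i, j ≥ 0` with `i + j + 1 ≤ k`, each of the three squared nearest-neighbor distances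
is at least `(2/k²)·(2 − (k+1)²/k²)`. -/
theorem octahedral_neighbor_separation (k i j : ℕ) (hk : 1 ≤ k)
    (hij : i + j + 1 ≤ k) :
    (2 / (k : ℝ) ^ 2) * (2 - ((k : ℝ) + 1) ^ 2 / (k : ℝ) ^ 2) ≤
        ‖octA k (i + 1) j - octA k i j‖ ^ 2 ∧
    (2 / (k : ℝ) ^ 2) * (2 - ((k : ℝ) + 1) ^ 2 / (k : ℝ) ^ 2) ≤
        ‖octA k i (j + 1) - octA k i j‖ ^ 2 ∧
    (2 / (k : ℝ) ^ 2) * (2 - ((k : ℝ) + 1) ^ 2 / (k : ℝ) ^ 2) ≤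
        ‖octA k (i + 1) j - octA k i (j + 1)‖ ^ 2 :=
  octahedral_neighbor_separation_general k i j hij

end
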